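/- arXiv:1401.0950 — 10 statements merged into one kernel-verified Lean document; each statement's English description precedes it below -/
import Mathlib

section
/- Let (g, ⟨,⟩) be a pseudo-Riemannian flat Lie algebra with Levi-Civita product. Then the orthogonal complement of the derived ideal [g,g] equals the set of u ∈ g for which the right multiplication R_u (R_u v = v·u) is symmetric with respect to ⟨,⟩. -/
/-- In a pseudo-Riemannian flat Lie algebra, the orthogonal of the derived
ideal `[g,g]` is exactly the set of `u` such that right multiplication `R_u` is
symmetric with respect to the form. -/
theorem orthogonal_derived_ideal_eq_symmetric_right_mul
    (g : Type*) [LieRing g] [LieAlgebra ℝ g] [FiniteDimensional ℝ g]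
    (B : LinearMap.BilinForm ℝ g)
    (hsymm : ∀ x y, B x y = B y x)
    (hnd : B.Nondegenerate)
    (m : g →ₗ[ℝ] g →ₗ[ℝ] g)
    (koszul : ∀ u v w, 2 * B (m u v) w = B ⁅u, v⁆ w + B ⁅w, u⁆ v + B ⁅w, v⁆ u)
    (hflat : ∀ u v x, m ⁅u, v⁆ x = m u (m v x) - m v (m u x)) :
    ∀ u : g, (∀ x y : g, B ⁅x, y⁆ u = 0) ↔ (∀ v w, B (m v u) w = B v (m w u)) := by
  intro u
  have key : ∀ v w : g, B (m v u) w - B v (m w u) = B ⁅w, v⁆ u := by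
    intro v w
    have h1 := koszul v u w
    have h2 := koszul w u v
    have hs : B v (m w u) = B (m w u) v := hsymm v (m w u)
    have hanti : B ⁅v, w⁆ u = -B ⁅w, v⁆ u := by
      rw [← lie_skew v w, LinearMap.map_neg, LinearMap.neg_apply]
    linarith
  constructor
  · intro h v w
    have hk := key v w
    rw [h w v] at hk
    linarith
  · intro h x y
    have hk := key y x
    rw [h y x] at hk
    linarith
end

section
/- Let (g, ⟨,⟩) be a pseudo-Riemannian flat Lie algebra and u ∈ [g,g]^⊥ (so R_u is symmetric). Then u·u = 0. -/
/-! Koszul's formula makes every left multiplication `L_w` skew for `B`, so `B (w·u) u = 0`;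
symmetry of `R_u` and of `B` then give `B (u·u) w = B (w·u) u = 0` for every `w`. -/

section Koszul

variable {K g : Type*} [Field K] [NeZero (2 : K)] [LieRing g] [LieAlgebra K g]

theorem LinearMap.BilinForm.apply_leftMul_self_eq_zero_of_koszul (B : LinearMap.BilinForm K g)
    (m : g →ₗ[K] g →ₗ[K] g)
    (koszul : ∀ u v w, 2 * B (m u v) w = B ⁅u, v⁆ w + B ⁅w, u⁆ v + B ⁅w, v⁆ u) (w u : g) :
    B (m w u) u = 0 := by
  have h := koszul w u u
  rw [← lie_skew w u, lie_self, map_neg, map_zero, LinearMap.neg_apply, LinearMap.zero_apply,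
    neg_add_cancel, add_zero] at h
  exact (mul_eq_zero.mp h).resolve_left two_ne_zero

end Koszul

theorem flat_symmetric_right_mul_self_product_zero_general
    (g : Type*) [LieRing g] [LieAlgebra ℝ g]
    (B : LinearMap.BilinForm ℝ g)
    (hsymm : ∀ x y, B x y = B y x)
    (hnd : B.Nondegenerate)
    (m : g →ₗ[ℝ] g →ₗ[ℝ] g)
    (koszul : ∀ u v w, 2 * B (m u v) w = B ⁅u, v⁆ w + B ⁅w, u⁆ v + B ⁅w, v⁆ u)
    (u : g) (hu : ∀ v w, B (m v u) w = B v (m w u)) :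
    m u u = 0 := by
  refine hnd.1 _ fun w => ?_
  calc B (m u u) w = B (m w u) u := by rw [hu, hsymm]
    _ = 0 := B.apply_leftMul_self_eq_zero_of_koszul m koszul w u

/-- In a pseudo-Riemannian flat Lie algebra, if `u ∈ [g,g]^⊥`
(equivalently `R_u` is symmetric), then `u·u = 0`. -/
theorem flat_symmetric_right_mul_self_product_zero
    (g : Type*) [LieRing g] [LieAlgebra ℝ g] [FiniteDimensional ℝ g]
    (B : LinearMap.BilinForm ℝ g)
    (hsymm : ∀ x y, B x y = B y x)
    (hnd : B.Nondegenerate)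
    (m : g →ₗ[ℝ] g →ₗ[ℝ] g)
    (koszul : ∀ u v w, 2 * B (m u v) w = B ⁅u, v⁆ w + B ⁅w, u⁆ v + B ⁅w, v⁆ u)
    (hflat : ∀ u v x, m ⁅u, v⁆ x = m u (m v x) - m v (m u x))
    (u : g) (hu : ∀ v w, B (m v u) w = B v (m w u)) :
    m u u = 0 :=
  flat_symmetric_right_mul_self_product_zero_general g B hsymm hnd m koszul u hu
end

section
/- Let (g, ⟨,⟩) be a pseudo-Riemannian flat Lie algebra and u ∈ g with u·u = 0. Then for every positive integer k, [R_u^k, L_u] = k·R_u^{k+1}, where R_u and L_u are right and left multiplication by u for the Levi-Civita product. -/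
/-!
The Koszul formula makes the product torsion-free, `a·b - b·a = [a, b]`, and together with
flatness this gives the left-symmetric identity `[L_u, R_v] = R_{u·v} - R_v R_u`. For `v = u`
and `u·u = 0` it reads `R_u L_u - L_u R_u = R_u ^ 2`; since `X ↦ X L_u - L_u X` is a derivation,
each factor of `R_u ^ k` then contributes one `R_u ^ (k + 1)`.
-/

section LeviCivita

variable {K g : Type*} [Field K] [LieRing g] [LieAlgebra K g] {m : g →ₗ[K] g →ₗ[K] g}

theorem sub_swap_eq_lie_of_koszul [CharZero K] {B : LinearMap.BilinForm K g}
    (hB : B.SeparatingLeft)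
    (koszul : ∀ u v w, 2 * B (m u v) w = B ⁅u, v⁆ w + B ⁅w, u⁆ v + B ⁅w, v⁆ u) (a b : g) :
    m a b - m b a = ⁅a, b⁆ := by
  rw [← sub_eq_zero]
  refine hB _ fun w => ?_
  have h2 : (2 : K) * B (m a b - m b a - ⁅a, b⁆) w = 0 := by
    have hskew : B ⁅b, a⁆ w = -B ⁅a, b⁆ w := by rw [← lie_skew, map_neg, LinearMap.neg_apply]
    simp only [map_sub, LinearMap.sub_apply]
    linear_combination koszul a b w - koszul b a w - hskew
  simpa using h2

theorem leftSymmetric_of_flat (htf : ∀ a b, m a b - m b a = ⁅a, b⁆)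
    (hflat : ∀ u v x, m ⁅u, v⁆ x = m u (m v x) - m v (m u x)) (x u v : g) :
    m (m x u) v - m x (m u v) = m (m u x) v - m u (m x v) := by
  have h := hflat x u v
  rw [← htf, map_sub, LinearMap.sub_apply] at h
  rwa [sub_eq_sub_iff_sub_eq_sub]

end LeviCivita

theorem pow_mul_sub_mul_pow_of_mul_sub_mul_eq_sq {A : Type*} [Ring A] {r l : A}
    (h : r * l - l * r = r ^ 2) (k : ℕ) : r ^ k * l - l * r ^ k = k • r ^ (k + 1) := by
  induction k with
  | zero => simp
  | succ n ih =>
    calc r ^ (n + 1) * l - l * r ^ (n + 1)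
        = r ^ n * (r * l - l * r) + (r ^ n * l - l * r ^ n) * r := by
          rw [pow_succ]; noncomm_ring
      _ = (n + 1) • r ^ (n + 2) := by
          rw [h, ih, smul_mul_assoc, ← pow_succ, ← pow_add, succ_nsmul, add_comm]

theorem flat_right_mul_commutator_power_general
    (g : Type*) [LieRing g] [LieAlgebra ℝ g]
    (B : LinearMap.BilinForm ℝ g)
    (hnd : B.Nondegenerate)
    (m : g →ₗ[ℝ] g →ₗ[ℝ] g)
    (koszul : ∀ u v w, 2 * B (m u v) w = B ⁅u, v⁆ w + B ⁅w, u⁆ v + B ⁅w, v⁆ u)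
    (hflat : ∀ u v x, m ⁅u, v⁆ x = m u (m v x) - m v (m u x))
    (u : g) (huu : m u u = 0) :
    ∀ k : ℕ, 1 ≤ k →
      ((m.flip u : Module.End ℝ g) ^ k) * (m u : Module.End ℝ g)
        - (m u : Module.End ℝ g) * ((m.flip u : Module.End ℝ g) ^ k)
      = (k : ℝ) • ((m.flip u : Module.End ℝ g) ^ (k + 1)) := by
  intro k _
  have htf := sub_swap_eq_lie_of_koszul hnd.1 koszul
  have hsq : (m.flip u : Module.End ℝ g) * m u - m u * m.flip u = m.flip u ^ 2 := by
    ext x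
    have h := leftSymmetric_of_flat htf hflat x u u
    simp only [huu, map_zero, sub_zero] at h
    simp [pow_two, h]
  rw [Nat.cast_smul_eq_nsmul]
  exact pow_mul_sub_mul_pow_of_mul_sub_mul_eq_sq hsq k

/-- In a pseudo-Riemannian flat Lie algebra, if `u·u = 0`, then for every
positive integer `k`, `[R_u^k, L_u] = k • R_u^{k+1}`. -/
theorem flat_right_mul_commutator_power
    (g : Type*) [LieRing g] [LieAlgebra ℝ g] [FiniteDimensional ℝ g]
    (B : LinearMap.BilinForm ℝ g)
    (hsymm : ∀ x y, B x y = B y x)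
    (hnd : B.Nondegenerate)
    (m : g →ₗ[ℝ] g →ₗ[ℝ] g)
    (koszul : ∀ u v w, 2 * B (m u v) w = B ⁅u, v⁆ w + B ⁅w, u⁆ v + B ⁅w, v⁆ u)
    (hflat : ∀ u v x, m ⁅u, v⁆ x = m u (m v x) - m v (m u x))
    (u : g) (huu : m u u = 0) :
    ∀ k : ℕ, 1 ≤ k →
      ((m.flip u : Module.End ℝ g) ^ k) * (m u : Module.End ℝ g)
        - (m u : Module.End ℝ g) * ((m.flip u : Module.End ℝ g) ^ k)
      = (k : ℝ) • ((m.flip u : Module.End ℝ g) ^ (k + 1)) :=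
  flat_right_mul_commutator_power_general g B hnd m koszul hflat u huu
end

section
/- Let (g, ⟨,⟩) be a pseudo-Riemannian flat Lie algebra with modular vector h defined by ⟨h, u⟩ = tr(ad_u) for all u. Then h ∈ [g,g] ∩ [g,g]^⊥. In particular, if g is nonunimodular then the derived ideal [g,g] is degenerate and ⟨h,h⟩ = 0. -/
/-!
Since `ad ⁅x, y⁆` is a commutator, `⟨h, ⁅x, y⁆⟩ = tr (ad ⁅x, y⁆) = 0`, i.e. `h ⊥ [g, g]`.
As `[g, g] = ([g, g]^⊥)^⊥`, the membership `h ∈ [g, g]` amounts to `tr (ad z) = 0` for every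
`z ⊥ [g, g]`. Torsion-freeness gives `ad z = L_z - R_z` with `L_z = m z`, `R_z = m.flip z`.
The Koszul formula makes `L_z` skew-adjoint, hence traceless. For `z ⊥ [g, g]` it also gives
`z z = 0`, and flatness applied to `(v, z, z)` becomes `R_z² = R_z L_z - L_z R_z`. Hence
`tr R_z^k = 0` for `k ≥ 2`, so in characteristic zero `R_z²` and therefore `R_z` are nilpotent,
and `tr R_z = 0`.
-/

open LinearMap Module LieAlgebra

namespace LinearMap

lemma trace_pow_eq_zero_of_sq_eq_mul_sub_mul {R M : Type*} [CommRing R] [AddCommGroup M]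
    [Module R M] {P Q : End R M} (h : P ^ 2 = P * Q - Q * P) {k : ℕ} (hk : 2 ≤ k) :
    trace R M (P ^ k) = 0 := by
  obtain ⟨j, rfl⟩ := Nat.exists_eq_add_of_le' hk
  rw [pow_add, h, mul_sub, map_sub, ← mul_assoc, ← mul_assoc, ← pow_succ, trace_mul_cycle,
    ← pow_succ', sub_self]

variable {K V : Type*} [Field K] [CharZero K] [AddCommGroup V] [Module K V]
  [FiniteDimensional K V]

lemma det_eq_zero_of_forall_trace_pow_eq_zero [Nontrivial V] {f : End K V}
    (hf : ∀ k ≠ 0, trace K V (f ^ k) = 0) : LinearMap.det f = 0 := by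
  -- the trace of the Cayley–Hamilton identity reduces to `f.charpoly.coeff 0 * dim V = 0`
  have hCH : trace K V (Polynomial.aeval f f.charpoly) = 0 := by
    rw [aeval_self_charpoly, map_zero]
  rw [Polynomial.aeval_eq_sum_range, map_sum, Finset.sum_eq_single_of_mem 0 (by simp)
    (fun k _ hk => by rw [map_smul, hf k hk, smul_zero]), pow_zero, map_smul, trace_one,
    smul_eq_mul, mul_eq_zero, Nat.cast_eq_zero] at hCH
  rw [det_eq_sign_charpoly_coeff, hCH.resolve_right finrank_pos.ne', mul_zero]

theorem isNilpotent_of_forall_trace_pow_eq_zero {f : End K V}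
    (hf : ∀ k ≠ 0, trace K V (f ^ k) = 0) : IsNilpotent f := by
  -- `det f = 0`, so `f` restricted to its proper subspace `range f` is a smaller instance
  induction hn : finrank K V using Nat.strong_induction_on generalizing V with
  | _ n ih =>
  rcases subsingleton_or_nontrivial V with hV | hV
  · exact ⟨1, Subsingleton.elim _ _⟩
  have hmaps : ∀ x ∈ range f, f x ∈ range f := fun x _ => mem_range_self f x
  have hlt : finrank K (range f) < n :=
    hn ▸ Submodule.finrank_lt (range_lt_top_of_det_eq_zero
      (det_eq_zero_of_forall_trace_pow_eq_zero hf)).ne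
  have htr : ∀ k ≠ 0, trace K (range f) (f.restrict hmaps ^ k) = 0 := by
    intro k hk
    obtain ⟨j, rfl⟩ := Nat.exists_eq_succ_of_ne_zero hk
    rw [Module.End.pow_restrict, trace_restrict_eq_of_forall_mem _ _
      (fun x => by rw [pow_succ', Module.End.mul_apply]; exact mem_range_self f _)]
    exact hf _ hk
  obtain ⟨N, hN⟩ := ih _ hlt htr rfl
  refine ⟨N + 1, ext fun x => ?_⟩
  have := congr_arg Subtype.val (LinearMap.congr_fun hN ⟨f x, mem_range_self f x⟩)
  rwa [Module.End.pow_restrict, restrict_apply] at this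

theorem isNilpotent_of_sq_eq_mul_sub_mul {P Q : End K V} (h : P ^ 2 = P * Q - Q * P) :
    IsNilpotent P := by
  obtain ⟨N, hN⟩ := isNilpotent_of_forall_trace_pow_eq_zero (f := P ^ 2) fun k hk => by
    rw [← pow_mul]
    exact trace_pow_eq_zero_of_sq_eq_mul_sub_mul h (by omega)
  exact ⟨2 * N, by rwa [pow_mul]⟩

theorem BilinForm.trace_eq_zero_of_isSkewAdjoint {B : LinearMap.BilinForm K V}
    (hB : B.Nondegenerate) {f : End K V} (hf : IsSkewAdjoint B f) : trace K V f = 0 := by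
  have hconj : (B.toDual hB).conj f + Dual.transpose f = 0 := by
    ext φ w
    simp only [LinearEquiv.conj_apply, LinearMap.add_apply, coe_comp, LinearEquiv.coe_coe,
      Function.comp_apply, LinearMap.zero_apply]
    rw [BilinForm.toDual_def, hf, BilinForm.apply_toDual_symm_apply, Dual.transpose_apply,
      LinearMap.comp_apply, Pi.neg_apply, map_neg, neg_add_cancel]
  have := congr_arg (trace K (Dual K V)) hconj
  rw [map_add, trace_conj', trace_transpose', map_zero, ← two_mul] at this
  simpa using this

end LinearMap

section LieBracket

variable {R L : Type*} [CommRing R] [LieRing L] [LieAlgebra R L]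

lemma LieAlgebra.trace_ad_lie_eq_zero (x y : L) : trace R L (ad R L ⁅x, y⁆) = 0 := by
  have had : ad R L ⁅x, y⁆ = ad R L x * ad R L y - ad R L y * ad R L x := by
    ext z
    simp only [ad_apply, LinearMap.sub_apply, Module.End.mul_apply, lie_lie]
  rw [had, map_sub, trace_mul_comm, sub_self]

lemma LieAlgebra.mem_orthogonal_derivedSeries_one_iff {B : LinearMap.BilinForm R L} {z : L} :
    z ∈ B.orthogonal (derivedSeries R L 1) ↔ ∀ x y : L, B ⁅x, y⁆ z = 0 := by
  change _ ≤ ker (B.flip z) ↔ _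
  rw [coe_derivedSeries_one_eq, Submodule.span_le]
  exact ⟨fun h x y => h ⟨x, y, rfl⟩, fun h _ ⟨x, y, hxy⟩ => hxy ▸ h x y⟩

lemma LinearMap.BilinForm.apply_lie_swap (B : LinearMap.BilinForm R L) (a b c : L) :
    B ⁅a, b⁆ c = -B ⁅b, a⁆ c := by
  rw [← lie_skew, map_neg, LinearMap.neg_apply]

end LieBracket

section LeviCivita

variable {K L : Type*} [Field K] [LieRing L] [LieAlgebra K L]

def IsLeviCivitaProduct (B : LinearMap.BilinForm K L) (m : L →ₗ[K] L →ₗ[K] L) : Prop :=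
  ∀ u v w, 2 * B (m u v) w = B ⁅u, v⁆ w + B ⁅w, u⁆ v + B ⁅w, v⁆ u

def IsFlatProduct (m : L →ₗ[K] L →ₗ[K] L) : Prop :=
  ∀ u v x, m ⁅u, v⁆ x = m u (m v x) - m v (m u x)

namespace IsLeviCivitaProduct

variable [CharZero K] {B : LinearMap.BilinForm K L} {m : L →ₗ[K] L →ₗ[K] L}

lemma isSkewAdjoint (hm : IsLeviCivitaProduct B m) (hB : B.IsSymm) (u : L) :
    IsSkewAdjoint B (m u) := by
  intro v w
  have h₁ := hm u v w
  have h₂ := hm u w v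
  rw [B.apply_lie_swap u w, B.apply_lie_swap v u, B.apply_lie_swap v w] at h₂
  rw [Pi.neg_apply, map_neg, hB.eq v]
  linear_combination (h₁ + h₂) / 2

lemma lie_eq_sub (hm : IsLeviCivitaProduct B m) (hnd : B.Nondegenerate) (u v : L) :
    ⁅u, v⁆ = m u v - m v u := by
  refine (sub_eq_zero.mp (hnd.1 _ fun w => ?_)).symm
  have h₁ := hm u v w
  have h₂ := hm v u w
  rw [B.apply_lie_swap v u] at h₂
  rw [map_sub, map_sub, LinearMap.sub_apply, LinearMap.sub_apply]
  linear_combination (h₁ - h₂) / 2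

lemma apply_self_eq_zero (hm : IsLeviCivitaProduct B m) (hnd : B.Nondegenerate) {z : L}
    (hz : ∀ x y : L, B ⁅x, y⁆ z = 0) : m z z = 0 :=
  hnd.1 _ fun v => by
    have := hm z z v
    rw [lie_self, map_zero, LinearMap.zero_apply, hz] at this
    linear_combination this / 2

lemma sq_flip_eq (hm : IsLeviCivitaProduct B m) (hnd : B.Nondegenerate) (hflat : IsFlatProduct m)
    {z : L} (hz : ∀ x y : L, B ⁅x, y⁆ z = 0) :
    m.flip z ^ 2 = m.flip z * m z - m z * m.flip z := by
  ext v
  have h := hflat v z z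
  rw [hm.apply_self_eq_zero hnd hz, map_zero, zero_sub, hm.lie_eq_sub hnd, map_sub,
    LinearMap.sub_apply] at h
  simp only [pow_two, Module.End.mul_apply, flip_apply, LinearMap.sub_apply]
  linear_combination (norm := module) h

theorem trace_ad_eq_zero [FiniteDimensional K L] (hm : IsLeviCivitaProduct B m)
    (hflat : IsFlatProduct m) (hB : B.IsSymm) (hnd : B.Nondegenerate) {z : L}
    (hz : ∀ x y : L, B ⁅x, y⁆ z = 0) : trace K L (ad K L z) = 0 := by
  have had : ad K L z = m z - m.flip z := by
    ext u
    rw [ad_apply, hm.lie_eq_sub hnd, LinearMap.sub_apply, flip_apply]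
  have hnil : IsNilpotent (m.flip z) :=
    isNilpotent_of_sq_eq_mul_sub_mul (hm.sq_flip_eq hnd hflat hz)
  rw [had, map_sub, BilinForm.trace_eq_zero_of_isSkewAdjoint hnd (hm.isSkewAdjoint hB z),
    (isNilpotent_trace_of_isNilpotent hnil).eq_zero, sub_zero]

end IsLeviCivitaProduct

end LeviCivita

/-- In a pseudo-Riemannian flat Lie algebra, the modular vector `h`
(defined by `⟨h,u⟩ = tr(ad_u)`) lies in `[g,g] ∩ [g,g]^⊥`. In particular, if `g` is
nonunimodular (`h ≠ 0`) then `[g,g]` is degenerate and `⟨h,h⟩ = 0`. -/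
theorem modular_vector_in_derived_and_orthogonal
    (g : Type*) [LieRing g] [LieAlgebra ℝ g] [FiniteDimensional ℝ g]
    (B : LinearMap.BilinForm ℝ g)
    (hsymm : ∀ x y, B x y = B y x)
    (hnd : B.Nondegenerate)
    (m : g →ₗ[ℝ] g →ₗ[ℝ] g)
    (koszul : ∀ u v w, 2 * B (m u v) w = B ⁅u, v⁆ w + B ⁅w, u⁆ v + B ⁅w, v⁆ u)
    (hflat : ∀ u v x, m ⁅u, v⁆ x = m u (m v x) - m v (m u x))
    (h : g) (hmod : ∀ u, B h u = LinearMap.trace ℝ g (LieAlgebra.ad ℝ g u)) :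
    h ∈ LieAlgebra.derivedSeries ℝ g 1 ∧
    (∀ x y : g, B ⁅x, y⁆ h = 0) ∧
    (h ≠ 0 →
      B h h = 0 ∧
      ∃ v, v ∈ LieAlgebra.derivedSeries ℝ g 1 ∧ v ≠ 0 ∧
        ∀ w ∈ LieAlgebra.derivedSeries ℝ g 1, B v w = 0) := by
  have hB : B.IsSymm := ⟨hsymm⟩
  have horth : h ∈ B.orthogonal (derivedSeries ℝ g 1) :=
    mem_orthogonal_derivedSeries_one_iff.mpr fun x y => by
      rw [hsymm, hmod, trace_ad_lie_eq_zero]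
  have hmem : h ∈ derivedSeries ℝ g 1 := by
    have : h ∈ B.orthogonal (B.orthogonal (derivedSeries ℝ g 1)) := fun z hz => by
      rw [hsymm, hmod]
      exact IsLeviCivitaProduct.trace_ad_eq_zero koszul hflat hB hnd
        (mem_orthogonal_derivedSeries_one_iff.mp hz)
    rwa [B.orthogonal_orthogonal hnd hB.isRefl] at this
  have hperp : ∀ w ∈ derivedSeries ℝ g 1, B h w = 0 := fun w hw => by
    rw [hsymm]
    exact horth w hw
  exact ⟨hmem, mem_orthogonal_derivedSeries_one_iff.mp horth,
    fun hne => ⟨hperp h hmem, h, hmem, hne, hperp⟩⟩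
end

section
/- Let ρ: g → so(V) be an indecomposable representation of a real solvable Lie algebra g on a Euclidean vector space V by skew-symmetric endomorphisms. Then either dim V = 1 and ρ = 0, or dim V = 2 and there exist a nonzero linear functional λ on g vanishing on [g,g] and an orthonormal basis (e,f) of V such that ρ(u)e = λ(u)f and ρ(u)f = −λ(u)e for all u; in particular ρ(u)² = −λ(u)² Id. -/
/-!
The trace form `B(X, Y) = tr (X Y)` is definite on skew-symmetric operators, so the image
`ρ(g)` is a solvable Lie algebra carrying an anisotropic invariant form. Such an algebra is
abelian: an abelian ideal is central since `B([x, a], [x, a]) = B(x, [a, [x, a]])`, and central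
elements are `B`-orthogonal to the derived algebra, which is nonzero only if it contains a nonzero
abelian ideal. So the `ρ(u)` are commuting skew operators. By Schur's lemma for symmetric
operators a nonzero `ρ(u₀)` squares to a negative scalar, which normalises to a complex structure
`J`; each `ρ(u) J` is symmetric and commutes with the action, hence scalar, so `ρ(u) ∈ ℝ J`.
For a unit vector `e`, `span {e, J e}` is invariant, hence is all of `V`.
-/

open RealInnerProductSpace

attribute [local instance] LieRing.ofAssociativeRing

lemma LieAlgebra.derivedAbelianOfIdeal_le {R L : Type*} [CommRing R] [LieRing L]
    [LieAlgebra R L] (I : LieIdeal R L) : derivedAbelianOfIdeal I ≤ I := by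
  unfold derivedAbelianOfIdeal
  split
  · exact bot_le
  · exact derivedSeriesOfIdeal_le_self I _

namespace LieModule

open LieAlgebra

variable {R L M : Type*} [CommRing R] [LieRing L] [LieAlgebra R L]
  [AddCommGroup M] [Module R M] [LieRingModule L M] [LieModule R L M]

lemma lie_eq_zero_of_traceForm_anisotropic (h : ∀ x, traceForm R L M x x = 0 → x = 0)
    {x y : L} (hxy : ⁅y, ⁅x, y⁆⁆ = 0) : ⁅x, y⁆ = 0 :=
  h _ <| by rw [traceForm_apply_lie_apply, hxy, map_zero]

lemma le_center_of_traceForm_anisotropic (h : ∀ x, traceForm R L M x x = 0 → x = 0)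
    (I : LieIdeal R L) [IsLieAbelian I] : I ≤ center R L := fun a ha x =>
  lie_eq_zero_of_traceForm_anisotropic h <|
    congrArg Subtype.val (trivial_lie_zero I I ⟨a, ha⟩ ⟨⁅x, a⁆, I.lie_mem ha⟩)

theorem isLieAbelian_of_traceForm_anisotropic
    [IsSolvable L] (h : ∀ x, traceForm R L M x x = 0 → x = 0) : IsLieAbelian L := by
  set D := lowerCentralSeries R L L 1
  have hbot : derivedAbelianOfIdeal D = ⊥ := by
    have := abelian_derivedAbelianOfIdeal D
    refine eq_bot_iff.mpr fun a ha => h a ?_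
    exact traceForm_apply_eq_zero_of_mem_lcs_of_mem_center R L M (derivedAbelianOfIdeal_le D ha)
      (le_center_of_traceForm_anisotropic h _ ha)
  rw [abelian_of_solvable_ideal_eq_bot_iff] at hbot
  exact (trivial_iff_lower_central_eq_bot R L L).mpr hbot

end LieModule

lemma Module.End.apply_apply_of_mul_self_eq_neg_one {R M : Type*} [CommRing R]
    [AddCommGroup M] [Module R M] {J : Module.End R M} (hJJ : J * J = -1) (x : M) :
    J (J x) = -x := by
  rw [← Module.End.mul_apply, hJJ, LinearMap.neg_apply, Module.End.one_apply]

section Skew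

variable {V : Type*} [NormedAddCommGroup V] [InnerProductSpace ℝ V]

lemma inner_apply_self_eq_zero_of_skew {A : Module.End ℝ V}
    (hA : ∀ x y, ⟪A x, y⟫ = -⟪x, A y⟫) (x : V) : ⟪x, A x⟫ = 0 := by
  have := hA x x
  rw [real_inner_comm] at this
  linarith

lemma isSymmetric_mul_of_skew_of_commute {A B : Module.End ℝ V}
    (hA : ∀ x y, ⟪A x, y⟫ = -⟪x, A y⟫) (hB : ∀ x y, ⟪B x, y⟫ = -⟪x, B y⟫)
    (hAB : Commute A B) : (A * B).IsSymmetric := fun x y => by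
  rw [Module.End.mul_apply, hA, hB, neg_neg, ← Module.End.mul_apply B, ← hAB.eq,
    Module.End.mul_apply]

lemma orthonormal_pair_of_skew_of_mul_self_eq_neg_one {J : Module.End ℝ V}
    (hJ : ∀ x y, ⟪J x, y⟫ = -⟪x, J y⟫) (hJJ : J * J = -1) {e : V} (he : ‖e‖ = 1) :
    Orthonormal ℝ ![e, J e] := by
  have hJe : ‖J e‖ = 1 := by
    rw [← sq_eq_sq₀ (norm_nonneg _) zero_le_one, ← real_inner_self_eq_norm_sq, hJ,
      Module.End.apply_apply_of_mul_self_eq_neg_one hJJ, inner_neg_right, neg_neg,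
      real_inner_self_eq_norm_sq, he]
  rw [orthonormal_iff_ite]
  simp [Fin.forall_fin_two, he, hJe, inner_apply_self_eq_zero_of_skew hJ e, real_inner_comm e]

lemma eq_zero_of_skew_of_trace_mul_self_eq_zero [FiniteDimensional ℝ V] {A : Module.End ℝ V}
    (hA : ∀ x y, ⟪A x, y⟫ = -⟪x, A y⟫) (h : LinearMap.trace ℝ V (A * A) = 0) : A = 0 := by
  set b := stdOrthonormalBasis ℝ V
  have hsum : ∑ i, ‖A (b i)‖ ^ 2 = 0 := by
    have hdiag : ∀ i, ⟪b i, (A * A) (b i)⟫ = -‖A (b i)‖ ^ 2 := fun i => by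
      rw [Module.End.mul_apply, ← real_inner_self_eq_norm_sq, hA, neg_neg]
    simpa only [LinearMap.trace_eq_sum_inner _ b, hdiag, Finset.sum_neg_distrib, neg_eq_zero]
      using h
  have hzero : ∀ i, A (b i) = 0 := fun i => by
    simpa using (Finset.sum_eq_zero_iff_of_nonneg fun i _ => sq_nonneg ‖A (b i)‖).mp hsum i
      (Finset.mem_univ i)
  exact b.toBasis.ext fun i => by simpa using hzero i

end Skew

theorem LieSubalgebra.isLieAbelian_of_skew {V : Type*} [NormedAddCommGroup V]
    [InnerProductSpace ℝ V] [FiniteDimensional ℝ V] (L : LieSubalgebra ℝ (Module.End ℝ V))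
    [LieAlgebra.IsSolvable L] (hL : ∀ A ∈ L, ∀ x y : V, ⟪A x, y⟫ = -⟪x, A y⟫) :
    IsLieAbelian L :=
  LieModule.isLieAbelian_of_traceForm_anisotropic (M := V) fun A hA =>
    Subtype.ext <| eq_zero_of_skew_of_trace_mul_self_eq_zero (hL A A.2) hA

lemma LieHom.map_lie_eq_zero_of_skew {g V : Type*} [LieRing g] [LieAlgebra ℝ g]
    [LieAlgebra.IsSolvable g] [NormedAddCommGroup V] [InnerProductSpace ℝ V]
    [FiniteDimensional ℝ V] (ρ : g →ₗ⁅ℝ⁆ Module.End ℝ V)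
    (hskew : ∀ (u : g) (x y : V), ⟪ρ u x, y⟫ = -⟪x, ρ u y⟫) (u v : g) : ρ ⁅u, v⁆ = 0 := by
  have := ρ.range.isLieAbelian_of_skew (by rintro _ ⟨w, rfl⟩; exact hskew w)
  simpa using congrArg Subtype.val (trivial_lie_zero ρ.range ρ.range ⟨ρ u, u, rfl⟩ ⟨ρ v, v, rfl⟩)

lemma LinearMap.exists_eq_smul_of_forall_mem_span_singleton {K E F : Type*} [Field K]
    [AddCommGroup E] [Module K E] [AddCommGroup F] [Module K F] (ρ : E →ₗ[K] F) {J : F}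
    (hJ : J ≠ 0) (h : ∀ u, ρ u ∈ K ∙ J) : ∃ l : E →ₗ[K] K, ∀ u, ρ u = l u • J := by
  let eJ := LinearEquiv.toSpanNonzeroSingleton K F J hJ
  refine ⟨eJ.symm.toLinearMap ∘ₗ ρ.codRestrict _ h, fun u => ?_⟩
  exact (congrArg Subtype.val (eJ.apply_symm_apply ⟨ρ u, h u⟩)).symm

def IsIrreducibleFamily {R M ι : Type*} [Semiring R] [AddCommMonoid M] [Module R M]
    (ρ : ι → Module.End R M) : Prop :=
  ∀ W : Submodule R M, (∀ i, ∀ x ∈ W, ρ i x ∈ W) → W = ⊥ ∨ W = ⊤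

namespace IsIrreducibleFamily

section Field

variable {K M ι : Type*} [Field K] [AddCommGroup M] [Module K M] {ρ : ι → Module.End K M}

lemma eq_top (hρ : IsIrreducibleFamily ρ) {W : Submodule K M}
    (hW : ∀ i, ∀ x ∈ W, ρ i x ∈ W) {x : M} (hx : x ∈ W) (hx0 : x ≠ 0) : W = ⊤ :=
  (hρ W hW).resolve_left fun h => hx0 <| by simpa [h] using hx

lemma finrank_eq_one [Nontrivial M] (hρ : IsIrreducibleFamily ρ) (h : ∀ i, ρ i = 0) :
    Module.finrank K M = 1 := by
  obtain ⟨x, hx⟩ := exists_ne (0 : M)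
  have htop := hρ.eq_top (W := K ∙ x) (fun i y _ => by simp [h i])
    (Submodule.mem_span_singleton_self x) hx
  rw [← finrank_top K M, ← htop, finrank_span_singleton hx]

end Field

section InnerProductSpace

variable {V ι : Type*} [NormedAddCommGroup V] [InnerProductSpace ℝ V] {ρ : ι → Module.End ℝ V}

lemma finrank_eq_two (hρ : IsIrreducibleFamily ρ) {J : Module.End ℝ V} (hJJ : J * J = -1)
    (hρJ : ∀ i, ρ i ∈ ℝ ∙ J) {e : V} (hon : Orthonormal ℝ ![e, J e]) :
    Module.finrank ℝ V = 2 := by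
  set W := Submodule.span ℝ (Set.range ![e, J e])
  have hJW : W ≤ W.comap J := by
    rw [Submodule.span_le, Set.range_subset_iff, Fin.forall_fin_two]
    exact ⟨Submodule.subset_span ⟨1, rfl⟩, by
      simpa [Module.End.apply_apply_of_mul_self_eq_neg_one hJJ]
        using W.neg_mem (Submodule.subset_span ⟨0, rfl⟩)⟩
  have hW : W = ⊤ := hρ.eq_top (x := e) (fun i x hx => by
      obtain ⟨t, ht⟩ := Submodule.mem_span_singleton.mp (hρJ i)
      rw [← ht]
      exact W.smul_mem t (hJW hx))
    (Submodule.subset_span ⟨0, rfl⟩) (hon.ne_zero 0)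
  rw [← finrank_top, ← hW, finrank_span_eq_card hon.linearIndependent, Fintype.card_fin]

variable [FiniteDimensional ℝ V] [Nontrivial V]

lemma exists_eq_smul_one_of_isSymmetric (hρ : IsIrreducibleFamily ρ) {S : Module.End ℝ V}
    (hS : S.IsSymmetric) (hcomm : ∀ i, Commute (ρ i) S) : ∃ c : ℝ, S = c • 1 := by
  obtain ⟨c, hc⟩ : ∃ c, Module.End.HasEigenvalue S c :=
    ⟨_, hS.hasEigenvalue_iSup_of_finiteDimensional⟩
  have hinv : ∀ i, ∀ x ∈ S.eigenspace c, ρ i x ∈ S.eigenspace c := fun i x hx => by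
    rw [Module.End.mem_eigenspace_iff] at hx ⊢
    rw [← Module.End.mul_apply, ← (hcomm i).eq, Module.End.mul_apply, hx, map_smul]
  have htop := (hρ _ hinv).resolve_left hc
  exact ⟨c, LinearMap.ext fun x => Module.End.mem_eigenspace_iff.mp (htop ▸ Submodule.mem_top)⟩

lemma exists_mul_self_eq_neg_one (hρ : IsIrreducibleFamily ρ) {A : Module.End ℝ V}
    (hA : ∀ x y, ⟪A x, y⟫ = -⟪x, A y⟫) (hA0 : A ≠ 0) (hcomm : ∀ i, Commute (ρ i) A) :
    ∃ J : Module.End ℝ V, (∀ x y, ⟪J x, y⟫ = -⟪x, J y⟫) ∧ J * J = -1 ∧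
      ∀ i, Commute (ρ i) J := by
  obtain ⟨c, hc⟩ := hρ.exists_eq_smul_one_of_isSymmetric
    (isSymmetric_mul_of_skew_of_commute hA hA (Commute.refl A))
    fun i => (hcomm i).mul_right (hcomm i)
  obtain ⟨x, hx⟩ : ∃ x, A x ≠ 0 := by
    by_contra! h
    exact hA0 (LinearMap.ext h)
  have hc_neg : c < 0 := by
    have hx0 : x ≠ 0 := fun h => hx (by rw [h, map_zero])
    have hAA : A (A x) = c • x := by
      rw [← Module.End.mul_apply, hc, LinearMap.smul_apply, Module.End.one_apply]
    have : c * ‖x‖ ^ 2 = -‖A x‖ ^ 2 := by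
      rw [← real_inner_self_eq_norm_sq, ← real_inner_self_eq_norm_sq, ← real_inner_smul_left,
        ← hAA, hA]
    nlinarith [norm_pos_iff.mpr hx, norm_pos_iff.mpr hx0]
  refine ⟨(√(-c))⁻¹ • A, fun x y => ?_, ?_, fun i => (hcomm i).smul_right _⟩
  · simp only [LinearMap.smul_apply, real_inner_smul_left, real_inner_smul_right, hA, mul_neg]
  · rw [smul_mul_smul, hc, smul_smul, ← mul_inv, ← pow_two, Real.sq_sqrt (by linarith),
      inv_neg, neg_mul, inv_mul_cancel₀ hc_neg.ne, neg_smul, one_smul]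

lemma mem_span_of_mul_self_eq_neg_one (hρ : IsIrreducibleFamily ρ) {J B : Module.End ℝ V}
    (hJ : ∀ x y, ⟪J x, y⟫ = -⟪x, J y⟫) (hJJ : J * J = -1) (hJcomm : ∀ i, Commute (ρ i) J)
    (hB : ∀ x y, ⟪B x, y⟫ = -⟪x, B y⟫) (hBcomm : ∀ i, Commute (ρ i) B) (hBJ : Commute B J) :
    B ∈ ℝ ∙ J := by
  obtain ⟨d, hd⟩ := hρ.exists_eq_smul_one_of_isSymmetric
    (isSymmetric_mul_of_skew_of_commute hB hJ hBJ) fun i => (hBcomm i).mul_right (hJcomm i)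
  refine Submodule.mem_span_singleton.mpr ⟨-d, ?_⟩
  calc -d • J = -((B * J) * J) := by rw [hd, smul_one_mul, neg_smul]
    _ = B := by rw [mul_assoc, hJJ, mul_neg_one, neg_neg]

lemma exists_complex_structure (hρ : IsIrreducibleFamily ρ)
    (hskew : ∀ i x y, ⟪ρ i x, y⟫ = -⟪x, ρ i y⟫) (hcomm : ∀ i j, Commute (ρ i) (ρ j)) {i₀ : ι}
    (hi₀ : ρ i₀ ≠ 0) :
    ∃ J : Module.End ℝ V, (∀ x y, ⟪J x, y⟫ = -⟪x, J y⟫) ∧ J * J = -1 ∧ ∀ i, ρ i ∈ ℝ ∙ J := by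
  obtain ⟨J, hJ, hJJ, hJcomm⟩ :=
    hρ.exists_mul_self_eq_neg_one (hskew i₀) hi₀ fun i => hcomm i i₀
  exact ⟨J, hJ, hJJ, fun i => hρ.mem_span_of_mul_self_eq_neg_one hJ hJJ hJcomm
    (hskew i) (fun j => hcomm j i) (hJcomm i)⟩

end InnerProductSpace

end IsIrreducibleFamily

theorem indecomposable_euclidean_rep_solvable_general
    (g : Type*) [LieRing g] [LieAlgebra ℝ g]
    [LieAlgebra.IsSolvable g]
    (V : Type*) [NormedAddCommGroup V] [InnerProductSpace ℝ V]
    [FiniteDimensional ℝ V] [Nontrivial V]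
    (ρ : g →ₗ⁅ℝ⁆ Module.End ℝ V)
    (hskew : ∀ (u : g) (x y : V), ⟪ρ u x, y⟫ = -⟪x, ρ u y⟫)
    (hind : ∀ W : Submodule ℝ V, (∀ (u : g), ∀ x ∈ W, ρ u x ∈ W) → W = ⊥ ∨ W = ⊤) :
    (Module.finrank ℝ V = 1 ∧ ∀ (u : g) (x : V), ρ u x = 0) ∨
    (Module.finrank ℝ V = 2 ∧
      ∃ l : g →ₗ[ℝ] ℝ, l ≠ 0 ∧ (∀ x y : g, l ⁅x, y⁆ = 0) ∧
        ∃ e f : V, ⟪e, e⟫ = 1 ∧ ⟪f, f⟫ = 1 ∧ ⟪e, f⟫ = 0 ∧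
          (∀ u : g, ρ u e = l u • f ∧ ρ u f = -(l u) • e) ∧
          (∀ u : g, (ρ u) ^ 2 = -((l u) ^ 2) • (1 : Module.End ℝ V))) := by
  have hirr : IsIrreducibleFamily ρ := hind
  have hcomm : ∀ u v, Commute (ρ u) (ρ v) := fun u v => commute_iff_lie_eq.mpr <| by
    rw [← LieHom.map_lie, ρ.map_lie_eq_zero_of_skew hskew]
  by_cases hρ0 : ∀ u, ρ u = 0
  · exact Or.inl ⟨hirr.finrank_eq_one hρ0, fun u x => by rw [hρ0 u, LinearMap.zero_apply]⟩
  push Not at hρ0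
  obtain ⟨u₀, hu₀⟩ := hρ0
  obtain ⟨J, hJ, hJJ, hρJ⟩ := hirr.exists_complex_structure hskew hcomm hu₀
  have hJ0 : J ≠ 0 := by rintro rfl; simp at hJJ
  obtain ⟨l, hl⟩ : ∃ l : g →ₗ[ℝ] ℝ, ∀ u, ρ u = l u • J :=
    ρ.toLinearMap.exists_eq_smul_of_forall_mem_span_singleton hJ0 hρJ
  obtain ⟨e, he⟩ := exists_norm_eq V zero_le_one
  have hon := orthonormal_pair_of_skew_of_mul_self_eq_neg_one hJ hJJ he
  have hJJe := Module.End.apply_apply_of_mul_self_eq_neg_one hJJ e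
  refine Or.inr ⟨hirr.finrank_eq_two hJJ hρJ hon, l, ?_, fun x y => ?_, e, J e, ?_, ?_, ?_,
    fun u => ⟨by rw [hl u]; rfl, by rw [hl u, LinearMap.smul_apply, hJJe, smul_neg, neg_smul]⟩,
    fun u => by rw [hl u, pow_two, smul_mul_smul, hJJ, ← pow_two, smul_neg, neg_smul]⟩
  · rintro rfl
    exact hu₀ (by simpa using hl u₀)
  · have := hl ⁅x, y⁆
    rw [ρ.map_lie_eq_zero_of_skew hskew, eq_comm, smul_eq_zero] at this
    exact this.resolve_right hJ0
  · rw [real_inner_self_eq_norm_sq, he, one_pow]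
  · rw [real_inner_self_eq_norm_sq, show ‖J e‖ = 1 from hon.1 1, one_pow]
  · simpa using hon.2 zero_ne_one

/-- An indecomposable representation of a real solvable Lie algebra on a
(nonzero) Euclidean vector space by skew-symmetric endomorphisms is either trivial
one-dimensional, or two-dimensional given by a rotation via a nonzero closed
functional `λ`, with `ρ(u)² = −λ(u)² Id`. -/
theorem indecomposable_euclidean_rep_solvable
    (g : Type*) [LieRing g] [LieAlgebra ℝ g] [FiniteDimensional ℝ g]
    [LieAlgebra.IsSolvable g]
    (V : Type*) [NormedAddCommGroup V] [InnerProductSpace ℝ V]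
    [FiniteDimensional ℝ V] [Nontrivial V]
    (ρ : g →ₗ⁅ℝ⁆ Module.End ℝ V)
    (hskew : ∀ (u : g) (x y : V), ⟪ρ u x, y⟫ = -⟪x, ρ u y⟫)
    (hind : ∀ W : Submodule ℝ V, (∀ (u : g), ∀ x ∈ W, ρ u x ∈ W) → W = ⊥ ∨ W = ⊤) :
    (Module.finrank ℝ V = 1 ∧ ∀ (u : g) (x : V), ρ u x = 0) ∨
    (Module.finrank ℝ V = 2 ∧
      ∃ l : g →ₗ[ℝ] ℝ, l ≠ 0 ∧ (∀ x y : g, l ⁅x, y⁆ = 0) ∧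
        ∃ e f : V, ⟪e, e⟫ = 1 ∧ ⟪f, f⟫ = 1 ∧ ⟪e, f⟫ = 0 ∧
          (∀ u : g, ρ u e = l u • f ∧ ρ u f = -(l u) • e) ∧
          (∀ u : g, (ρ u) ^ 2 = -((l u) ^ 2) • (1 : Module.End ℝ V))) :=
  indecomposable_euclidean_rep_solvable_general g V ρ hskew hind
end

section
/- Every solvable Lie subalgebra of so(V), the Lie algebra of skew-symmetric endomorphisms of a finite-dimensional real positive-definite inner product space V, is abelian. -/
/-!
The trace form `(F, G) ↦ tr (F G)` of `so(V)` is invariant, and it is negative definite since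
`tr (F F) = -∑ ‖F eᵢ‖²` for an orthonormal basis `(eᵢ)`. Invariance gives
`tr (⁅a, b⁆ ⁅a, b⁆) = -tr (b ⁅a, ⁅a, b⁆⁆)`, so `⁅a, ⁅a, b⁆⁆ = 0` forces `⁅a, b⁆ = 0`. In a Lie
algebra with this property every abelian ideal is central, and an ideal whose derived ideal is
central is abelian; hence the derived series cannot stop at `⊥` later than at step `1`.
-/

open RealInnerProductSpace

attribute [local instance] LieRing.ofAssociativeRing

theorem LinearMap.BilinForm.lieInvariant.lie_eq_zero_of_lie_lie_eq_zero {R L : Type*}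
    [CommRing R] [LieRing L] [LieAlgebra R L] {B : LinearMap.BilinForm R L} (hB : B.lieInvariant L)
    (hanis : B.toQuadraticMap.Anisotropic) {a b : L} (h : ⁅a, ⁅a, b⁆⁆ = 0) : ⁅a, b⁆ = 0 :=
  hanis _ <| by rw [LinearMap.BilinMap.toQuadraticMap_apply, hB, h, map_zero, neg_zero]

section

variable {R L : Type*} [CommRing R] [LieRing L] [LieAlgebra R L]
  (hL : ∀ a b : L, ⁅a, ⁅a, b⁆⁆ = 0 → ⁅a, b⁆ = 0)
include hL

theorem LieIdeal.le_center_of_lie_self_eq_bot {I : LieIdeal R L} (hI : ⁅I, I⁆ = ⊥) :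
    I ≤ LieAlgebra.center R L := by
  intro a ha
  rw [LieModule.mem_maxTrivSubmodule]
  intro z
  rw [← lie_skew, neg_eq_zero]
  exact hL a z <| (LieSubmodule.lie_eq_bot_iff _ _).mp hI a ha _ (lie_mem_left R L I a z ha)

theorem LieIdeal.lie_self_eq_bot_of_le_center {I : LieIdeal R L}
    (hI : ⁅I, I⁆ ≤ LieAlgebra.center R L) : ⁅I, I⁆ = ⊥ := by
  rw [LieSubmodule.lie_eq_bot_iff]
  intro x hx y hy
  have hcentral : ⁅y, ⁅x, y⁆⁆ = 0 :=
    (LieModule.mem_maxTrivSubmodule R L L _).mp (hI (LieSubmodule.lie_mem_lie hx hy)) y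
  rw [← lie_skew, neg_eq_zero]
  exact hL y x (by rw [← lie_skew y x, lie_neg, hcentral, neg_zero])

theorem LieIdeal.lie_self_eq_bot_of_lie_lie_self_eq_bot {I : LieIdeal R L}
    (hI : ⁅⁅I, I⁆, ⁅I, I⁆⁆ = ⊥) : ⁅I, I⁆ = ⊥ :=
  lie_self_eq_bot_of_le_center hL (le_center_of_lie_self_eq_bot hL hI)

theorem LieAlgebra.derivedSeries_one_eq_bot_of_succ_eq_bot {k : ℕ}
    (hk : derivedSeries R L (k + 1) = ⊥) : derivedSeries R L 1 = ⊥ := by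
  induction k with
  | zero => exact hk
  | succ k ih =>
    refine ih ?_
    rw [derivedSeries_def, derivedSeriesOfIdeal_succ, derivedSeriesOfIdeal_succ] at hk
    rw [derivedSeries_def, derivedSeriesOfIdeal_succ]
    exact LieIdeal.lie_self_eq_bot_of_lie_lie_self_eq_bot hL hk

theorem LieAlgebra.isLieAbelian_of_isSolvable [IsSolvable L] : IsLieAbelian L := by
  obtain ⟨k, hk⟩ := IsSolvable.solvable ℤ L
  have hk' : derivedSeries ℤ L (k + 1) = ⊥ :=
    eq_bot_iff.mpr (hk ▸ derivedSeriesOfIdeal_succ_le _ k)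
  have h1 := derivedSeries_one_eq_bot_of_succ_eq_bot hL hk'
  rw [derivedSeries_def, derivedSeriesOfIdeal_succ, derivedSeriesOfIdeal_zero,
    LieSubmodule.lie_eq_bot_iff] at h1
  exact ⟨fun x y => h1 x (LieSubmodule.mem_top x) y (LieSubmodule.mem_top y)⟩

end

theorem LinearMap.eq_zero_of_trace_mul_self_eq_zero_of_skew {V : Type*} [NormedAddCommGroup V]
    [InnerProductSpace ℝ V] [FiniteDimensional ℝ V] {F : Module.End ℝ V}
    (hF : ∀ x y : V, ⟪F x, y⟫ = -⟪x, F y⟫) (htr : trace ℝ V (F * F) = 0) : F = 0 := by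
  let b := stdOrthonormalBasis ℝ V
  have hterm (i) : ⟪b i, (F * F) (b i)⟫ = -‖F (b i)‖ ^ 2 := by
    rw [Module.End.mul_apply, ← real_inner_self_eq_norm_sq, hF, neg_neg]
  have hsum : ∑ i, ‖F (b i)‖ ^ 2 = 0 := by
    rw [trace_eq_sum_inner _ b, Finset.sum_congr rfl fun i _ => hterm i, Finset.sum_neg_distrib,
      neg_eq_zero] at htr
    exact htr
  refine b.toBasis.ext fun i => ?_
  rw [b.coe_toBasis, zero_apply, ← norm_eq_zero, ← sq_eq_zero_iff]
  exact (Finset.sum_eq_zero_iff_of_nonneg (fun i _ => by positivity)).mp hsum i (Finset.mem_univ i)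

/-- Every solvable Lie subalgebra of the skew-symmetric endomorphisms of a
finite-dimensional real inner product space is abelian. -/
theorem solvable_subalgebra_of_skew_is_abelian
    (V : Type*) [NormedAddCommGroup V] [InnerProductSpace ℝ V] [FiniteDimensional ℝ V]
    (h : LieSubalgebra ℝ (Module.End ℝ V))
    (hskew : ∀ F ∈ h, ∀ x y : V, ⟪F x, y⟫ = -⟪x, F y⟫)
    (hsolv : LieAlgebra.IsSolvable h) :
    ∀ x ∈ h, ∀ y ∈ h, ⁅x, y⁆ = (0 : Module.End ℝ V) := by
  have hanis : (LieModule.traceForm ℝ h V).toQuadraticMap.Anisotropic := fun c hc =>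
    Subtype.ext (LinearMap.eq_zero_of_trace_mul_self_eq_zero_of_skew (hskew c c.2) hc)
  have : IsLieAbelian h := LieAlgebra.isLieAbelian_of_isSolvable fun _ _ =>
    (LieModule.traceForm_lieInvariant ℝ h V).lie_eq_zero_of_lie_lie_eq_zero hanis
  intro x hx y hy
  exact congrArg Subtype.val (trivial_lie_zero h h ⟨x, hx⟩ ⟨y, hy⟩)
end

section
/- Let ρ: g → so(V) be an indecomposable representation of a real solvable Lie algebra on a Lorentzian vector space V with dim V = 2 and V not equal to its invariant subspace V₀. Then there exists a nonzero linear functional λ on g, vanishing on [g,g], and a basis (e, ē) of V with ⟨e,e⟩ = ⟨ē,ē⟩ = 0, ⟨e,ē⟩ = 1, such that ρ(u)e = λ(u)e and ρ(u)ē = −λ(u)ē for all u ∈ g. -/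
attribute [local instance 100] LieRing.ofAssociativeRing

/-!
In a Lorentzian plane with orthonormal basis `b₀, b₁` (`b₀` timelike), the vectors `e = b₀ + b₁`
and `ē = (b₁ - b₀)/2` form a null basis with `⟨e, ē⟩ = 1`, and every vector is
`x = ⟨x, ē⟩ e + ⟨x, e⟩ ē`. A skew endomorphism `A` satisfies `⟨A x, x⟩ = 0`, so it preserves both
null lines, acting by `λ = ⟨A e, ē⟩` on `e` and by `-λ` on `ē`. Applied to `A = ρ(u)`, this makes
`λ` a linear functional; it kills `[g, g]` because the operators `ρ(u)` commute on the line `ℝ e`,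
and it is nonzero since otherwise `ρ = 0`, i.e. `V = V₀`.
-/

namespace LorentzianPlane

variable {R V : Type*} [CommRing R] [AddCommGroup V] [Module R V]

structure IsNullBasis (B : LinearMap.BilinForm R V) (e f : V) : Prop where
  apply_left_left : B e e = 0
  apply_right_right : B f f = 0
  apply_left_right : B e f = 1
  span_eq_top : Submodule.span R {e, f} = ⊤

namespace IsNullBasis

variable {B : LinearMap.BilinForm R V} {e f : V}

theorem linearMap_ext (h : IsNullBasis B e f) {A A' : V →ₗ[R] V} (he : A e = A' e)
    (hf : A f = A' f) : A = A' :=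
  LinearMap.ext_on h.span_eq_top <| by
    rintro x (rfl | rfl) <;> assumption

theorem eq_smul_add_smul (h : IsNullBasis B e f) (hB : ∀ x y, B x y = B y x) (x : V) :
    x = B x f • e + B x e • f := by
  have hfe : B f e = 1 := hB e f ▸ h.apply_left_right
  have hid : LinearMap.id = (B.flip f).smulRight e + (B.flip e).smulRight f :=
    h.linearMap_ext (by simp [h.apply_left_left, h.apply_left_right])
      (by simp [h.apply_right_right, hfe])
  simpa using LinearMap.congr_fun hid x

end IsNullBasis

theorem apply_self_eq_zero_of_skew [IsDomain R] [CharZero R] {B : LinearMap.BilinForm R V}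
    (hB : ∀ x y, B x y = B y x) {A : V →ₗ[R] V} (hA : ∀ x y, B (A x) y = -B x (A y))
    (x : V) : B (A x) x = 0 := by
  have h := hA x x
  rw [hB x (A x)] at h
  exact (mul_eq_zero.1 (by linear_combination h : (2 : R) * B (A x) x = 0)).resolve_left
    two_ne_zero

namespace IsNullBasis

variable [IsDomain R] [CharZero R] {B : LinearMap.BilinForm R V} {e f : V}
  (h : IsNullBasis B e f) (hB : ∀ x y, B x y = B y x) {A : V →ₗ[R] V}
  (hA : ∀ x y, B (A x) y = -B x (A y))
include h hB hA

theorem skew_apply_left : A e = B (A e) f • e := by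
  conv_lhs => rw [h.eq_smul_add_smul hB (A e)]
  rw [apply_self_eq_zero_of_skew hB hA, zero_smul, add_zero]

theorem skew_apply_right : A f = -B (A e) f • f := by
  conv_lhs => rw [h.eq_smul_add_smul hB (A f)]
  rw [apply_self_eq_zero_of_skew hB hA, zero_smul, zero_add, hA, hB f]

end IsNullBasis

theorem isNullBasis_of_orthonormal {K : Type*} [Field K] [CharZero K] [Module K V]
    {B : LinearMap.BilinForm K V} (hB : ∀ x y, B x y = B y x) (b : Module.Basis (Fin 2) K V)
    (hb00 : B (b 0) (b 0) = -1) (hb11 : B (b 1) (b 1) = 1) (hb01 : B (b 0) (b 1) = 0) :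
    IsNullBasis B (b 0 + b 1) ((2 : K)⁻¹ • (b 1 - b 0)) := by
  have hb10 : B (b 1) (b 0) = 0 := hB (b 0) (b 1) ▸ hb01
  refine ⟨?_, ?_, ?_, ?_⟩
  · simp [hb00, hb11, hb01, hb10]
  · simp [hb00, hb11, hb01, hb10]
  · norm_num [hb00, hb11, hb01, hb10]
  · set S := Submodule.span K {b 0 + b 1, (2 : K)⁻¹ • (b 1 - b 0)}
    have he : b 0 + b 1 ∈ S := Submodule.subset_span (by simp)
    have hf : (2 : K)⁻¹ • (b 1 - b 0) ∈ S := Submodule.subset_span (by simp)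
    have hb0 : b 0 = (2 : K)⁻¹ • (b 0 + b 1) - (2 : K)⁻¹ • (b 1 - b 0) := by module
    have hb1 : b 1 = (2 : K)⁻¹ • (b 0 + b 1) + (2 : K)⁻¹ • (b 1 - b 0) := by module
    rw [eq_top_iff, ← b.span_eq, Submodule.span_le]
    rintro _ ⟨i, rfl⟩
    fin_cases i
    · exact hb0 ▸ S.sub_mem (S.smul_mem _ he) hf
    · exact hb1 ▸ S.add_mem (S.smul_mem _ he) hf

end LorentzianPlane

theorem LieHom.apply_lie_eq_zero_of_apply_eq_smul {R L M : Type*} [CommRing R] [LieRing L]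
    [LieAlgebra R L] [AddCommGroup M] [Module R M] (ρ : L →ₗ⁅R⁆ Module.End R M) {l : L → R}
    {v : M} (hv : ∀ u, ρ u v = l u • v) (x y : L) : ρ ⁅x, y⁆ v = 0 := by
  rw [LieHom.map_lie, LieRing.of_associative_ring_bracket, LinearMap.sub_apply,
    Module.End.mul_apply, Module.End.mul_apply, hv, hv, map_smul, map_smul, hv, hv, smul_smul,
    smul_smul, mul_comm, sub_self]

open LorentzianPlane in
theorem indecomposable_lorentzian_rep_dim_two_general
    (g : Type*) [LieRing g] [LieAlgebra ℝ g]
    (V : Type*) [AddCommGroup V] [Module ℝ V]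
    (B : LinearMap.BilinForm ℝ V) (hBsymm : ∀ x y, B x y = B y x)
    (b : Module.Basis (Fin 2) ℝ V)
    (hb00 : B (b 0) (b 0) = -1) (hb11 : B (b 1) (b 1) = 1) (hb01 : B (b 0) (b 1) = 0)
    (ρ : g →ₗ⁅ℝ⁆ Module.End ℝ V)
    (hskew : ∀ (u : g) (x y : V), B (ρ u x) y = -B x (ρ u y))
    (hV0 : (⨅ u : g, LinearMap.ker (ρ u)) ≠ ⊤) :
    ∃ l : g →ₗ[ℝ] ℝ, l ≠ 0 ∧ (∀ x y : g, l ⁅x, y⁆ = 0) ∧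
      ∃ e ebar : V, B e e = 0 ∧ B ebar ebar = 0 ∧ B e ebar = 1 ∧
        Submodule.span ℝ {e, ebar} = ⊤ ∧
        (∀ u : g, ρ u e = l u • e ∧ ρ u ebar = -(l u) • ebar) := by
  have hnull := isNullBasis_of_orthonormal hBsymm b hb00 hb11 hb01
  set e := b 0 + b 1
  set ebar := (2 : ℝ)⁻¹ • (b 1 - b 0)
  let l : g →ₗ[ℝ] ℝ := (B.flip ebar).comp ((LinearMap.applyₗ e).comp ρ.toLinearMap)
  have he (u : g) : ρ u e = l u • e := hnull.skew_apply_left hBsymm (hskew u)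
  have hebar (u : g) : ρ u ebar = -l u • ebar := hnull.skew_apply_right hBsymm (hskew u)
  refine ⟨l, ?_, fun x y => ?_, e, ebar, hnull.apply_left_left, hnull.apply_right_right,
    hnull.apply_left_right, hnull.span_eq_top, fun u => ⟨he u, hebar u⟩⟩
  · intro hl
    refine hV0 (eq_top_iff.2 fun x _ => (Submodule.mem_iInf _).2 fun u => ?_)
    have hρu : ρ u = 0 :=
      hnull.linearMap_ext (by simp [he, hl]) (by simp [hebar, hl])
    simp [hρu]
  · change B (ρ ⁅x, y⁆ e) ebar = 0
    rw [ρ.apply_lie_eq_zero_of_apply_eq_smul he, map_zero, LinearMap.zero_apply]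

/-- An indecomposable representation of a real solvable Lie algebra by
skew-symmetric endomorphisms on a 2-dimensional Lorentzian space (signature (1,1)),
with `V ≠ V₀`, admits a nonzero closed functional `λ` and a basis of isotropic vectors
`e, ē` with `⟨e,ē⟩ = 1` such that `ρ(u)e = λ(u)e` and `ρ(u)ē = −λ(u)ē`. -/
theorem indecomposable_lorentzian_rep_dim_two
    (g : Type*) [LieRing g] [LieAlgebra ℝ g] [FiniteDimensional ℝ g]
    [LieAlgebra.IsSolvable g]
    (V : Type*) [AddCommGroup V] [Module ℝ V]
    (B : LinearMap.BilinForm ℝ V) (hBsymm : ∀ x y, B x y = B y x)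
    (b : Module.Basis (Fin 2) ℝ V)
    (hb00 : B (b 0) (b 0) = -1) (hb11 : B (b 1) (b 1) = 1) (hb01 : B (b 0) (b 1) = 0)
    (ρ : g →ₗ⁅ℝ⁆ Module.End ℝ V)
    (hskew : ∀ (u : g) (x y : V), B (ρ u x) y = -B x (ρ u y))
    (hind : ∀ W : Submodule ℝ V, (∀ (u : g), ∀ x ∈ W, ρ u x ∈ W) →
      (∀ x ∈ W, (∀ y ∈ W, B x y = 0) → x = 0) → W = ⊥ ∨ W = ⊤)
    (hV0 : (⨅ u : g, LinearMap.ker (ρ u)) ≠ ⊤) :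
    ∃ l : g →ₗ[ℝ] ℝ, l ≠ 0 ∧ (∀ x y : g, l ⁅x, y⁆ = 0) ∧
      ∃ e ebar : V, B e e = 0 ∧ B ebar ebar = 0 ∧ B e ebar = 1 ∧
        Submodule.span ℝ {e, ebar} = ⊤ ∧
        (∀ u : g, ρ u e = l u • e ∧ ρ u ebar = -(l u) • ebar) :=
  indecomposable_lorentzian_rep_dim_two_general g V B hBsymm b hb00 hb11 hb01 ρ hskew hV0
end

section
/- Let ρ: g → so(V) be an indecomposable representation of a real solvable Lie algebra on a Lorentzian vector space V with dim V ≥ 3. Then there exists a linear functional λ on g vanishing on [g,g] such that the weight space V_λ = {x : ρ(u)x = λ(u)x for all u} is a one-dimensional totally isotropic subspace, and V_μ = {0} for every μ ≠ λ. -/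
/-!
Complexifying and applying Lie's theorem to `ℂ ⊗ V` gives a common eigenvector `w`, and the real
parts of `ℂ ∙ w` form a nonzero invariant subspace `U ⊆ V` of dimension at most two. As `V` is
indecomposable of dimension at least three, `U` is degenerate. Skew-symmetry makes its radical
invariant, and since a Lorentzian form has no two orthogonal independent isotropic vectors, any
nonzero `e` in the radical spans an invariant isotropic line: a weight vector of weight `λ`.

A weight vector `x` of any weight is isotropic, since otherwise `ℝ ∙ x` would split off. If
`B e x = 0` then `x` is a multiple of `e`; otherwise `e` and `x` span an invariant hyperbolic plane,
which would split off as well.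
-/

attribute [local instance 100] LieRing.ofAssociativeRing

open Module

namespace TensorProduct

variable {M : Type*} [AddCommGroup M] [Module ℝ M]

noncomputable def complexRe : ℂ ⊗[ℝ] M →ₗ[ℝ] M := TensorProduct.lid ℝ M ∘ₗ Complex.reLm.rTensor M

noncomputable def complexIm : ℂ ⊗[ℝ] M →ₗ[ℝ] M := TensorProduct.lid ℝ M ∘ₗ Complex.imLm.rTensor M

@[simp] lemma complexRe_tmul (a : ℂ) (m : M) : complexRe (a ⊗ₜ m) = a.re • m := rfl

@[simp] lemma complexIm_tmul (a : ℂ) (m : M) : complexIm (a ⊗ₜ m) = a.im • m := rfl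

lemma one_tmul_complexRe_add_I_tmul_complexIm (t : ℂ ⊗[ℝ] M) :
    (1 : ℂ) ⊗ₜ complexRe t + Complex.I ⊗ₜ complexIm t = t := by
  induction t with
  | zero => simp
  | tmul a m =>
    rw [complexRe_tmul, complexIm_tmul, tmul_smul, tmul_smul, smul_tmul', smul_tmul', ← add_tmul]
    congr 1
    simp
  | add s t hs ht =>
    simpa only [map_add, tmul_add, add_add_add_comm] using congrArg₂ (· + ·) hs ht

lemma complexRe_I_smul (t : ℂ ⊗[ℝ] M) : complexRe (Complex.I • t) = -complexIm t := by
  induction t with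
  | zero => simp
  | tmul a m => simp [smul_tmul', neg_smul]
  | add s t hs ht => simp only [smul_add, map_add, hs, ht, neg_add]

lemma eq_zero_of_complexRe_eq_zero {t : ℂ ⊗[ℝ] M} (h : complexRe t = 0)
    (hI : complexRe (Complex.I • t) = 0) : t = 0 := by
  rw [complexRe_I_smul, neg_eq_zero] at hI
  rw [← one_tmul_complexRe_add_I_tmul_complexIm t, h, hI, tmul_zero, tmul_zero, add_zero]

variable {L : Type*} [LieRing L] [LieAlgebra ℝ L] [LieRingModule L M] [LieModule ℝ L M]

/-- Stated through `toEnd`: written as a bracket, `⁅1 ⊗ₜ x, t⁆` picks up the bare `Bracket`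
instance of the base change, on which the `LieRingModule` lemmas do not fire. -/
lemma complexRe_toEnd_one_tmul (x : L) (t : ℂ ⊗[ℝ] M) :
    complexRe (LieModule.toEnd ℂ (ℂ ⊗[ℝ] L) (ℂ ⊗[ℝ] M) (1 ⊗ₜ x) t) = ⁅x, complexRe t⁆ := by
  induction t with
  | zero => simp
  | tmul a m =>
    rw [LieModule.toEnd_apply_apply, LieAlgebra.ExtendScalars.bracket_tmul]
    simp
  | add s t hs ht => rw [map_add, map_add, hs, ht, map_add, lie_add]

end TensorProduct

open TensorProduct LieModule in
theorem LieModule.exists_lieSubmodule_ne_bot_finrank_le_two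
    {L M : Type*} [LieRing L] [LieAlgebra ℝ L] [LieAlgebra.IsSolvable L]
    [AddCommGroup M] [Module ℝ M] [LieRingModule L M] [LieModule ℝ L M]
    [FiniteDimensional ℝ M] [Nontrivial M] :
    ∃ N : LieSubmodule ℝ L M, N ≠ ⊥ ∧ finrank ℝ N ≤ 2 := by
  have : Nontrivial (ℂ ⊗[ℝ] M) := Module.nontrivial_of_finrank_pos (R := ℂ)
    (by rw [Module.finrank_baseChange]; exact Module.finrank_pos)
  obtain ⟨χ, hχ⟩ := exists_nontrivial_weightSpace_of_isSolvable ℂ (ℂ ⊗[ℝ] L) (ℂ ⊗[ℝ] M)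
  obtain ⟨⟨w, hw⟩, hw0⟩ := exists_ne (0 : weightSpace (ℂ ⊗[ℝ] M) χ)
  rw [mem_weightSpace] at hw
  replace hw0 : w ≠ 0 := by simpa using hw0
  let S : Submodule ℝ (ℂ ⊗[ℝ] M) := (ℂ ∙ w).restrictScalars ℝ
  have hS : ∀ x : L, ∀ t ∈ S, toEnd ℂ (ℂ ⊗[ℝ] L) (ℂ ⊗[ℝ] M) (1 ⊗ₜ x) t ∈ S := by
    rintro x t ht
    obtain ⟨c, rfl⟩ := Submodule.mem_span_singleton.1 ht
    rw [map_smul, toEnd_apply_apply, hw, smul_smul]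
    exact Submodule.mem_span_singleton.2 ⟨_, rfl⟩
  let N : LieSubmodule ℝ L M :=
    { S.map complexRe with
      lie_mem := by
        rintro x _ ⟨t, ht, rfl⟩
        exact ⟨_, hS x t ht, complexRe_toEnd_one_tmul x t⟩ }
  have hmem : ∀ c : ℂ, complexRe (c • w) ∈ N := fun c =>
    ⟨c • w, Submodule.mem_span_singleton.2 ⟨c, rfl⟩, rfl⟩
  refine ⟨N, fun hN => hw0 ?_, ?_⟩
  · refine eq_zero_of_complexRe_eq_zero ?_ ?_
    · simpa [hN] using hmem 1
    · simpa [hN] using hmem Complex.I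
  · calc finrank ℝ N = finrank ℝ (S.map complexRe) := rfl
      _ ≤ finrank ℝ S := Submodule.finrank_map_le _ _
      _ = finrank ℝ ℂ * finrank ℂ (ℂ ∙ w) := (Module.finrank_mul_finrank ℝ ℂ (ℂ ∙ w)).symm
      _ = 2 := by rw [Complex.finrank_real_complex, finrank_span_singleton hw0]

theorem Module.End.exists_linearMap_apply_eq_smul {K L V : Type*} [Field K] [AddCommGroup L]
    [Module K L] [AddCommGroup V] [Module K V] (φ : L →ₗ[K] Module.End K V) {e : V} (he : e ≠ 0)
    (heig : ∀ u, ∃ c : K, φ u e = c • e) : ∃ l : L →ₗ[K] K, ∀ u, φ u e = l u • e := by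
  obtain ⟨f, hfe⟩ := Module.Projective.exists_dual_eq_one K he
  refine ⟨f ∘ₗ LinearMap.applyₗ e ∘ₗ φ, fun u => ?_⟩
  obtain ⟨c, hc⟩ := heig u
  simp [hc, hfe]

theorem LieHom.apply_lie_eq_zero_of_forall_apply_eq_smul {K L V : Type*} [Field K] [LieRing L]
    [LieAlgebra K L] [AddCommGroup V] [Module K V] (ρ : L →ₗ⁅K⁆ Module.End K V) {e : V}
    (he : e ≠ 0) {l : L →ₗ[K] K} (hl : ∀ u, ρ u e = l u • e) (x y : L) : l ⁅x, y⁆ = 0 := by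
  have h : l ⁅x, y⁆ • e = 0 := by
    rw [← hl, ρ.map_lie, Ring.lie_def, LinearMap.sub_apply, Module.End.mul_apply,
      Module.End.mul_apply, hl, hl, map_smul, map_smul, hl, hl, smul_smul, smul_smul, mul_comm,
      sub_self]
  exact (smul_eq_zero.1 h).resolve_right he

section Indecomposable

variable {K L V : Type*} [Field K] [LieRing L] [LieAlgebra K L] [AddCommGroup V] [Module K V]

def IsInvariantUnder (ρ : L →ₗ⁅K⁆ Module.End K V) (W : Submodule K V) : Prop :=
  ∀ u : L, ∀ x ∈ W, ρ u x ∈ W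

def NondegenerateOn (B : LinearMap.BilinForm K V) (W : Submodule K V) : Prop :=
  ∀ x ∈ W, (∀ y ∈ W, B x y = 0) → x = 0

def IsIndecomposable (B : LinearMap.BilinForm K V) (ρ : L →ₗ⁅K⁆ Module.End K V) : Prop :=
  ∀ W : Submodule K V, IsInvariantUnder ρ W → NondegenerateOn B W → W = ⊥ ∨ W = ⊤

/-- For a symmetric form this says that the Witt index is at most one. -/
def HasWittIndexLeOne (B : LinearMap.BilinForm K V) : Prop :=
  ∀ x y : V, B x x = 0 → B y y = 0 → B x y = 0 → x ≠ 0 → ∃ c : K, y = c • x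

variable {B : LinearMap.BilinForm K V} {ρ : L →ₗ⁅K⁆ Module.End K V}

theorem eq_bot_of_isIndecomposable (hind : IsIndecomposable B ρ) (hdim : 2 < finrank K V)
    {W : Submodule K V} (hW : IsInvariantUnder ρ W) (hWB : NondegenerateOn B W)
    (hW2 : finrank K W ≤ 2) : W = ⊥ := by
  refine (hind W hW hWB).resolve_right fun hWtop => ?_
  rw [hWtop, finrank_top] at hW2
  omega

theorem apply_self_eq_zero_of_forall_apply_eq_smul (hind : IsIndecomposable B ρ)
    (hdim : 2 < finrank K V) {mu : L → K} {x : V} (hx : ∀ u, ρ u x = mu u • x) :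
    B x x = 0 := by
  by_contra hxx
  have hinv : IsInvariantUnder ρ (K ∙ x) := by
    intro u z hz
    obtain ⟨t, rfl⟩ := Submodule.mem_span_singleton.1 hz
    rw [map_smul, hx u, smul_smul]
    exact Submodule.smul_mem _ _ (Submodule.mem_span_singleton_self x)
  have hnd : NondegenerateOn B (K ∙ x) := by
    intro z hz hperp
    obtain ⟨t, rfl⟩ := Submodule.mem_span_singleton.1 hz
    have htx := hperp x (Submodule.mem_span_singleton_self x)
    rw [map_smul, LinearMap.smul_apply, smul_eq_mul] at htx
    rw [(mul_eq_zero.1 htx).resolve_right hxx, zero_smul]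
  have hbot := eq_bot_of_isIndecomposable hind hdim hinv hnd <| by
    have := finrank_span_le_card (R := K) ({x} : Set V)
    simp only [Set.toFinset_singleton, Finset.card_singleton] at this
    omega
  rw [Submodule.span_singleton_eq_bot] at hbot
  simp [hbot] at hxx

theorem exists_isotropic_common_eigenvector
    (hskew : ∀ (u : L) (x y : V), B (ρ u x) y = -B x (ρ u y)) (hwitt : HasWittIndexLeOne B) (hind : IsIndecomposable B ρ) (hdim : 2 < finrank K V)
    {U : Submodule K V} (hU : IsInvariantUnder ρ U) (hU0 : U ≠ ⊥) (hU2 : finrank K U ≤ 2) :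
    ∃ e : V, e ≠ 0 ∧ B e e = 0 ∧ ∀ u, ∃ c : K, ρ u e = c • e := by
  have hdeg : ¬NondegenerateOn B U := fun hnd =>
    hU0 (eq_bot_of_isIndecomposable hind hdim hU hnd hU2)
  simp only [NondegenerateOn, not_forall, exists_prop] at hdeg
  obtain ⟨e, heU, heperp, he0⟩ := hdeg
  refine ⟨e, he0, heperp e heU, fun u =>
    hwitt e (ρ u e) (heperp e heU) ?_ (heperp _ (hU u e heU)) he0⟩
  -- `ρ u e` is again orthogonal to `U`, by skew-symmetry and invariance
  rw [hskew, heperp _ (hU u _ (hU u e heU)), neg_zero]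

theorem nondegenerateOn_span_pair (hBsymm : ∀ x y, B x y = B y x) {e x : V} (he : B e e = 0)
    (hx : B x x = 0) (hex : B e x ≠ 0) : NondegenerateOn B (Submodule.span K {e, x}) := by
  intro z hz hperp
  obtain ⟨s, t, rfl⟩ := Submodule.mem_span_pair.1 hz
  have hze := hperp e (Submodule.subset_span (by simp))
  have hzx := hperp x (Submodule.subset_span (by simp))
  simp only [map_add, map_smul, LinearMap.add_apply, LinearMap.smul_apply, smul_eq_mul, he, hx,
    hBsymm x e] at hze hzx
  have hs : s = 0 := by simpa [hex] using hzx
  have ht : t = 0 := by simpa [hs, hex] using hze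
  simp [hs, ht]

theorem exists_eq_smul_of_forall_apply_eq_smul [NeZero (2 : K)] (hBsymm : ∀ x y, B x y = B y x)
    (hwitt : HasWittIndexLeOne B) (hind : IsIndecomposable B ρ) (hdim : 2 < finrank K V)
    {l : L →ₗ[K] K} {e : V} (he0 : e ≠ 0) (he : ∀ u, ρ u e = l u • e)
    {x : V} (hx : ∀ u, ρ u x = l u • x) : ∃ c : K, x = c • e := by
  have hee := apply_self_eq_zero_of_forall_apply_eq_smul hind hdim he
  have hxx := apply_self_eq_zero_of_forall_apply_eq_smul hind hdim hx
  have hxe := apply_self_eq_zero_of_forall_apply_eq_smul hind hdim (x := x + e)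
    (fun u => by rw [map_add, hx, he, smul_add])
  -- `x + e` is again a weight vector, so it is isotropic and `B e x = 0`
  simp only [map_add, LinearMap.add_apply, hxx, hee, hBsymm x e, zero_add, add_zero, ← two_mul,
    mul_eq_zero, two_ne_zero, false_or] at hxe
  exact hwitt e x hee hxx hxe he0

theorem eq_zero_of_forall_apply_eq_smul_of_ne (hBsymm : ∀ x y, B x y = B y x)
    (hwitt : HasWittIndexLeOne B) (hind : IsIndecomposable B ρ) (hdim : 2 < finrank K V)
    {l mu : L →ₗ[K] K} (hmu : mu ≠ l) {e : V} (he0 : e ≠ 0) (he : ∀ u, ρ u e = l u • e)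
    {x : V} (hx : ∀ u, ρ u x = mu u • x) : x = 0 := by
  by_contra hx0
  have hee := apply_self_eq_zero_of_forall_apply_eq_smul hind hdim he
  have hxx := apply_self_eq_zero_of_forall_apply_eq_smul hind hdim hx
  by_cases hex : B e x = 0
  · obtain ⟨c, rfl⟩ := hwitt e x hee hxx hex he0
    refine hmu (LinearMap.ext fun u => smul_left_injective K hx0 ?_)
    simp only [← hx, map_smul, he, smul_comm c]
  · have hinv : IsInvariantUnder ρ (Submodule.span K {e, x}) := by
      intro u z hz
      obtain ⟨s, t, rfl⟩ := Submodule.mem_span_pair.1 hz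
      rw [map_add, map_smul, map_smul, he, hx, smul_smul, smul_smul]
      exact Submodule.mem_span_pair.2 ⟨_, _, rfl⟩
    have hbot := eq_bot_of_isIndecomposable hind hdim hinv
      (nondegenerateOn_span_pair hBsymm hee hxx hex) <| by
        classical
        have := finrank_span_le_card (R := K) ({e, x} : Set V)
        rw [Set.toFinset_insert, Set.toFinset_singleton] at this
        exact this.trans (Finset.card_le_two)
    exact he0 (Submodule.span_eq_bot.1 hbot e (by simp))

end Indecomposable

theorem exists_invariantUnder_ne_bot_finrank_le_two {L V : Type*} [LieRing L] [LieAlgebra ℝ L]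
    [LieAlgebra.IsSolvable L] [AddCommGroup V] [Module ℝ V] [FiniteDimensional ℝ V]
    [Nontrivial V] (ρ : L →ₗ⁅ℝ⁆ Module.End ℝ V) :
    ∃ U : Submodule ℝ V, IsInvariantUnder ρ U ∧ U ≠ ⊥ ∧ finrank ℝ U ≤ 2 := by
  let := LieRingModule.compLieHom V ρ
  have := LieModule.compLieHom (R := ℝ) V ρ
  obtain ⟨N, hN0, hN2⟩ := LieModule.exists_lieSubmodule_ne_bot_finrank_le_two (L := L) (M := V)
  exact ⟨N, fun u x hx => N.lie_mem hx, by simpa using hN0, hN2⟩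

section MinkowskiBasis

variable {V : Type*} [AddCommGroup V] [Module ℝ V]

def IsMinkowskiBasis (B : LinearMap.BilinForm ℝ V) {n : ℕ} (b : Basis (Fin n) ℝ V) : Prop :=
  ∀ i j, B (b i) (b j) = if i = j then (if (i : ℕ) = 0 then (-1 : ℝ) else 1) else 0

variable {B : LinearMap.BilinForm ℝ V} {n : ℕ} {b : Basis (Fin n) ℝ V}

theorem apply_eq_sum_of_minkowskiBasis (hb : IsMinkowskiBasis B b) (x y : V) :
    B x y = ∑ i : Fin n, (if (i : ℕ) = 0 then (-1 : ℝ) else 1) * (b.repr x i * b.repr y i) := by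
  conv_lhs => rw [← b.sum_repr x, ← b.sum_repr y]
  unfold IsMinkowskiBasis at hb
  simp only [map_sum, map_smul, LinearMap.sum_apply, LinearMap.smul_apply, hb, smul_eq_mul,
    mul_ite, mul_zero, Finset.sum_ite_eq', Finset.mem_univ, if_true]
  exact Finset.sum_congr rfl fun i _ => by split_ifs <;> ring

theorem eq_zero_of_apply_self_eq_zero_of_minkowskiBasis (hb : IsMinkowskiBasis B b) {z : V}
    (hz : ∀ i : Fin n, (i : ℕ) = 0 → b.repr z i = 0) (hzz : B z z = 0) : z = 0 := by
  have hsq : ∑ i : Fin n, b.repr z i ^ 2 = 0 := by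
    rw [← hzz, apply_eq_sum_of_minkowskiBasis hb]
    refine Finset.sum_congr rfl fun i _ => ?_
    split_ifs with hi
    · simp [hz i hi]
    · ring
  rw [Finset.sum_eq_zero_iff_of_nonneg fun i _ => sq_nonneg _] at hsq
  exact b.ext_elem_iff.2 fun i => by simpa using hsq i (Finset.mem_univ i)

theorem hasWittIndexLeOne_of_minkowskiBasis (hBsymm : ∀ x y, B x y = B y x)
    (hb : IsMinkowskiBasis B b) : HasWittIndexLeOne B := by
  intro x y hxx hyy hxy hx0
  obtain ⟨j, -⟩ : ∃ j, b.repr x j ≠ 0 := by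
    by_contra! h
    exact hx0 (b.ext_elem_iff.2 fun i => by simp [h i])
  set i₀ : Fin n := ⟨0, j.pos⟩
  have hi₀ : ∀ i : Fin n, (i : ℕ) = 0 → i = i₀ := fun i hi => Fin.ext hi
  have hx₀ : b.repr x i₀ ≠ 0 := fun h =>
    hx0 (eq_zero_of_apply_self_eq_zero_of_minkowskiBasis hb (fun i hi => hi₀ i hi ▸ h) hxx)
  -- `z` has vanishing time coordinate and is isotropic, hence zero
  set z := b.repr x i₀ • y - b.repr y i₀ • x
  have hz : z = 0 := by
    refine eq_zero_of_apply_self_eq_zero_of_minkowskiBasis hb (fun i hi => ?_) ?_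
    · simp [z, hi₀ i hi, mul_comm]
    · simp [z, hxx, hyy, hxy, hBsymm y x]
  refine ⟨b.repr y i₀ / b.repr x i₀, ?_⟩
  rw [sub_eq_zero] at hz
  rw [div_eq_inv_mul, mul_smul, ← hz, inv_smul_smul₀ hx₀]

end MinkowskiBasis

theorem indecomposable_lorentzian_rep_dim_ge_three_general
    (g : Type*) [LieRing g] [LieAlgebra ℝ g]
    [LieAlgebra.IsSolvable g]
    (V : Type*) [AddCommGroup V] [Module ℝ V]
    (B : LinearMap.BilinForm ℝ V) (hBsymm : ∀ x y, B x y = B y x)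
    (n : ℕ) (hn : 3 ≤ n) (b : Module.Basis (Fin n) ℝ V)
    (hb : ∀ i j, B (b i) (b j) =
      if i = j then (if (i : ℕ) = 0 then (-1 : ℝ) else 1) else 0)
    (ρ : g →ₗ⁅ℝ⁆ Module.End ℝ V)
    (hskew : ∀ (u : g) (x y : V), B (ρ u x) y = -B x (ρ u y))
    (hind : ∀ W : Submodule ℝ V, (∀ (u : g), ∀ x ∈ W, ρ u x ∈ W) →
      (∀ x ∈ W, (∀ y ∈ W, B x y = 0) → x = 0) → W = ⊥ ∨ W = ⊤) :
    ∃ l : g →ₗ[ℝ] ℝ, (∀ x y : g, l ⁅x, y⁆ = 0) ∧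
      ∃ e : V, e ≠ 0 ∧ B e e = 0 ∧
        (∀ u : g, ρ u e = l u • e) ∧
        (∀ x : V, (∀ u : g, ρ u x = l u • x) → ∃ c : ℝ, x = c • e) ∧
        (∀ mu : g →ₗ[ℝ] ℝ, mu ≠ l →
          ∀ x : V, (∀ u : g, ρ u x = mu u • x) → x = 0) := by
  have : FiniteDimensional ℝ V := Module.Finite.of_basis b
  have hdim : 2 < finrank ℝ V := by rw [finrank_eq_card_basis b, Fintype.card_fin]; omega
  have : Nontrivial V := Module.nontrivial_of_finrank_pos (R := ℝ) (by omega)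
  have hwitt := hasWittIndexLeOne_of_minkowskiBasis hBsymm hb
  obtain ⟨U, hU, hU0, hU2⟩ := exists_invariantUnder_ne_bot_finrank_le_two ρ
  obtain ⟨e, he0, hee, heig⟩ :=
    exists_isotropic_common_eigenvector hskew hwitt hind hdim hU hU0 hU2
  obtain ⟨l, hl⟩ := Module.End.exists_linearMap_apply_eq_smul ρ.toLinearMap he0 heig
  exact ⟨l, ρ.apply_lie_eq_zero_of_forall_apply_eq_smul he0 hl, e, he0, hee, hl,
    fun x hx => exists_eq_smul_of_forall_apply_eq_smul hBsymm hwitt hind hdim he0 hl hx,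
    fun mu hmu x hx =>
      eq_zero_of_forall_apply_eq_smul_of_ne hBsymm hwitt hind hdim hmu he0 hl hx⟩

/-- An indecomposable representation of a real solvable Lie algebra by
skew-symmetric endomorphisms on a Lorentzian space of dimension ≥ 3 admits a closed
functional `λ` whose weight space is one-dimensional and totally isotropic, while all
other weight spaces vanish. -/
theorem indecomposable_lorentzian_rep_dim_ge_three
    (g : Type*) [LieRing g] [LieAlgebra ℝ g] [FiniteDimensional ℝ g]
    [LieAlgebra.IsSolvable g]
    (V : Type*) [AddCommGroup V] [Module ℝ V]
    (B : LinearMap.BilinForm ℝ V) (hBsymm : ∀ x y, B x y = B y x)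
    (n : ℕ) (hn : 3 ≤ n) (b : Module.Basis (Fin n) ℝ V)
    (hb : ∀ i j, B (b i) (b j) =
      if i = j then (if (i : ℕ) = 0 then (-1 : ℝ) else 1) else 0)
    (ρ : g →ₗ⁅ℝ⁆ Module.End ℝ V)
    (hskew : ∀ (u : g) (x y : V), B (ρ u x) y = -B x (ρ u y))
    (hind : ∀ W : Submodule ℝ V, (∀ (u : g), ∀ x ∈ W, ρ u x ∈ W) →
      (∀ x ∈ W, (∀ y ∈ W, B x y = 0) → x = 0) → W = ⊥ ∨ W = ⊤) :
    ∃ l : g →ₗ[ℝ] ℝ, (∀ x y : g, l ⁅x, y⁆ = 0) ∧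
      ∃ e : V, e ≠ 0 ∧ B e e = 0 ∧
        (∀ u : g, ρ u e = l u • e) ∧
        (∀ x : V, (∀ u : g, ρ u x = l u • x) → ∃ c : ℝ, x = c • e) ∧
        (∀ mu : g →ₗ[ℝ] ℝ, mu ≠ l →
          ∀ x : V, (∀ u : g, ρ u x = mu u • x) → x = 0) :=
  indecomposable_lorentzian_rep_dim_ge_three_general g V B hBsymm n hn b hb ρ hskew hind
end

section
/- Let B be a 2-dimensional abelian Lie algebra with positive-definite inner product, A a skew-symmetric endomorphism and ξ an endomorphism of B satisfying [A, ξ] = ξ² − μξ with tr(ξ) ≠ −μ (where D = A + ξ). Writing ξ = (λ₁ λ₂; λ₃ λ₄) in an orthonormal basis, then (λ₂ − λ₃)(λ₁ + λ₄ − μ) = 0, i.e., either ξ is symmetric or tr(ξ) = μ. -/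
/-- For a 2-dimensional abelian Riemannian Lie algebra, if `A` is
skew-symmetric, `ξ = (λ₁ λ₂; λ₃ λ₄)`, `[A, ξ] = ξ² − μξ` and `tr ξ ≠ −μ`, then
`(λ₂ − λ₃)(λ₁ + λ₄ − μ) = 0`. -/
theorem two_dim_admissible_symmetric_or_trace
    (γ μ l₁ l₂ l₃ l₄ : ℝ)
    (A ξ : Matrix (Fin 2) (Fin 2) ℝ)
    (hA : A = !![0, γ; -γ, 0])
    (hξ : ξ = !![l₁, l₂; l₃, l₄])
    (hcomm : A * ξ - ξ * A = ξ * ξ - μ • ξ)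
    (htr : l₁ + l₄ ≠ -μ) :
    (l₂ - l₃) * (l₁ + l₄ - μ) = 0 := by
  subst hA hξ
  have h00 := congrFun (congrFun hcomm 0) 0
  have h01 := congrFun (congrFun hcomm 0) 1
  have h10 := congrFun (congrFun hcomm 1) 0
  have h11 := congrFun (congrFun hcomm 1) 1
  simp [Matrix.mul_apply, Fin.sum_univ_two, Matrix.smul_apply] at h00 h01 h10 h11
  linear_combination h10 - h01
end

section
/- Let B be a 2-dimensional abelian Lie algebra with positive-definite inner product, and suppose ξ is an endomorphism and A a skew-symmetric endomorphism with [A,ξ] = ξ² − μξ, tr(ξ) = μ and μ + tr(ξ) ≠ 0 (equivalently μ ≠ 0). Then A = 0 and det(ξ) = 0. -/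
/-- For a 2-dimensional abelian Riemannian Lie algebra, if `A` is
skew-symmetric, `[A, ξ] = ξ² − μξ`, `tr ξ = μ` and `μ ≠ 0`, then `A = 0` and
`det ξ = 0`. -/
theorem two_dim_admissible_trace_eq_mu
    (A ξ : Matrix (Fin 2) (Fin 2) ℝ) (μ : ℝ)
    (hA : A.transpose = -A) (hμ : μ ≠ 0)
    (hcomm : A * ξ - ξ * A = ξ * ξ - μ • ξ)
    (htr : ξ.trace = μ) :
    A = 0 ∧ ξ.det = 0 := by
  have hA00 : A 0 0 = 0 := by
    have := congrFun (congrFun hA 0) 0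
    simp [Matrix.transpose_apply] at this; linarith
  have hA11 : A 1 1 = 0 := by
    have := congrFun (congrFun hA 1) 1
    simp [Matrix.transpose_apply] at this; linarith
  have hA10 : A 1 0 = -A 0 1 := by
    have := congrFun (congrFun hA 0) 1
    simpa [Matrix.transpose_apply] using this
  rw [Matrix.trace_fin_two] at htr
  have h00 := congrFun (congrFun hcomm 0) 0
  have h01 := congrFun (congrFun hcomm 0) 1
  have h10 := congrFun (congrFun hcomm 1) 0
  have h11 := congrFun (congrFun hcomm 1) 1
  simp [Matrix.mul_apply, Fin.sum_univ_two, Matrix.sub_apply, Matrix.smul_apply,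
    hA00, hA11, hA10] at h00 h01 h10 h11
  set a := A 0 1 with ha
  set p := ξ 0 0
  set q := ξ 0 1
  set r := ξ 1 0
  set s := ξ 1 1
  have hμ' : μ = p + s := htr.symm
  subst hμ'
  have hdet : p * s - q * r = 0 := by nlinarith [h00, h11]
  have haz : a = 0 := by
    by_contra hne
    have hqr : q + r = 0 := by
      have h1 : a * (q + r) = 0 := by nlinarith [h00, h11]
      rcases mul_eq_zero.mp h1 with h | h
      · exact absurd h hne
      · exact h
    have hsp : s - p = 0 := by
      have h1 : a * (s - p) = 0 := by nlinarith [h01]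
      rcases mul_eq_zero.mp h1 with h | h
      · exact absurd h hne
      · exact h
    have hr : r = -q := by linarith
    have hs : s = p := by linarith
    rw [hr, hs] at hdet
    have hp : p = 0 := by nlinarith [hdet, sq_nonneg p, sq_nonneg q]
    have hq : q = 0 := by nlinarith [hdet, sq_nonneg p, sq_nonneg q]
    apply hμ
    simp [hs, hp]
  constructor
  · ext i j
    fin_cases i <;> fin_cases j <;>
      simp [hA00, hA11, hA10, haz, ← ha]
  · rw [Matrix.det_fin_two]
    linarith [hdet]
end
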